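/- Let ρ be a density matrix in the family such that whenever ρ^Γ is positive semidefinite the matrix X is diagonal. Then ρ^Γ positive semidefinite implies ρ is separable; i.e., for such subfamilies the PPT criterion is necessary and sufficient for separability. -/

import Mathlib

open Complex Matrix BigOperators
open scoped ComplexOrder

noncomputable section

def PT {dA dB : ℕ} (ρ : Matrix (Fin dA × Fin dB) (Fin dA × Fin dB) ℂ) :
    Matrix (Fin dA × Fin dB) (Fin dA × Fin dB) ℂ :=
  fun p q => ρ (p.1, q.2) (q.1, p.2)

def famState (dA dB : ℕ) (x : ℕ → ℕ → ℂ) (M N : ℕ → ℕ → ℕ → ℂ) :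
    Matrix (Fin dA × Fin dB) (Fin dA × Fin dB) ℂ :=
  fun p q =>
    (if (p.2 : ℕ) = (q.1 : ℕ) ∧ (q.2 : ℕ) = (p.1 : ℕ) then x p.1 q.1 else 0) +
    (if p.1 = q.1 ∧ (p.2 : ℕ) < (p.1 : ℕ) ∧ (q.2 : ℕ) < (q.1 : ℕ) then M p.1 p.2 q.2 else 0) +
    (if p.1 = q.1 ∧ (p.1 : ℕ) < (p.2 : ℕ) ∧ (q.1 : ℕ) < (q.2 : ℕ) then N p.1 p.2 q.2 else 0)

def SepState {dA dB : ℕ} (ρ : Matrix (Fin dA × Fin dB) (Fin dA × Fin dB) ℂ) : Prop :=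
  ∃ (n : ℕ) (p : Fin n → ℝ) (A : Fin n → Matrix (Fin dA) (Fin dA) ℂ)
    (B : Fin n → Matrix (Fin dB) (Fin dB) ℂ),
    (∀ i, 0 ≤ p i) ∧ (∑ i, p i = 1) ∧
    (∀ i, (A i).PosSemidef ∧ (A i).trace = 1) ∧
    (∀ i, (B i).PosSemidef ∧ (B i).trace = 1) ∧
    ρ = ∑ i, (p i : ℂ) • (Matrix.kroneckerMap (· * ·) (A i) (B i))

/-!
When the off-diagonal entries of `X` vanish, `ρ` is block diagonal with respect to the first
factor: `ρ = ∑ₖ |k⟩⟨k| ⊗ ρₖ` with `ρₖ ⪰ 0`. Normalising each block `ρₖ = tr(ρₖ) σₖ` exhibits `ρ`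
as a convex combination of product states. Conversely the partial transpose of a separable state
is again a sum of Kronecker products of positive matrices (Peres).
-/

open scoped Kronecker

def IsDensityMatrix {n : Type*} [Fintype n] (σ : Matrix n n ℂ) : Prop :=
  σ.PosSemidef ∧ σ.trace = 1

namespace Matrix

variable {m n : Type*}

theorem isDensityMatrix_single [Fintype n] [DecidableEq n] (k : n) :
    IsDensityMatrix (single k k (1 : ℂ)) :=
  ⟨diagonal_single k (1 : ℂ) ▸ PosSemidef.diagonal fun i => by by_cases h : i = k <;> simp [h],
    trace_single_eq_same k 1⟩

theorem PosSemidef.ofReal_re_trace [Fintype n] {B : Matrix n n ℂ} (hB : B.PosSemidef) :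
    ((B.trace.re : ℝ) : ℂ) = B.trace :=
  (Complex.eq_re_of_ofReal_le (r := 0) (by simpa using hB.trace_nonneg)).symm

theorem PosSemidef.exists_isDensityMatrix_smul [Fintype n] [DecidableEq n] [Nonempty n]
    {B : Matrix n n ℂ} (hB : B.PosSemidef) :
    ∃ σ, IsDensityMatrix σ ∧ B = ((B.trace.re : ℝ) : ℂ) • σ := by
  by_cases h : B.trace = 0
  · refine ⟨_, isDensityMatrix_single (Classical.arbitrary n), ?_⟩
    simp [hB.trace_eq_zero_iff.mp h]
  · refine ⟨B.trace⁻¹ • B, ⟨hB.smul (inv_nonneg.mpr hB.trace_nonneg), ?_⟩, ?_⟩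
    · rw [trace_smul, smul_eq_mul, inv_mul_cancel₀ h]
    · rw [hB.ofReal_re_trace, smul_smul, mul_inv_cancel₀ h, one_smul]

theorem trace_eq_sum_trace_submatrix [Fintype m] [Fintype n] {α : Type*} [AddCommMonoid α]
    (ρ : Matrix (m × n) (m × n) α) :
    ρ.trace = ∑ k, (ρ.submatrix (k, ·) (k, ·)).trace := by
  simp only [trace, Fintype.sum_prod_type, diag_apply, submatrix_apply]

theorem eq_sum_single_kronecker_submatrix [Fintype m] [DecidableEq m] {α : Type*} [Semiring α]
    (ρ : Matrix (m × n) (m × n) α) (hρ : ∀ k l i j, k ≠ l → ρ (k, i) (l, j) = 0) :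
    ρ = ∑ k, single k k 1 ⊗ₖ ρ.submatrix (k, ·) (k, ·) := by
  ext ⟨k, i⟩ ⟨l, j⟩
  simp only [sum_apply, kroneckerMap_apply, single_apply, submatrix_apply]
  by_cases hkl : k = l
  · subst hkl
    simp
  · rw [hρ k l i j hkl, eq_comm]
    refine Finset.sum_eq_zero fun k' _ => ?_
    obtain rfl | hk' := eq_or_ne k' k <;> simp [*]

end Matrix

theorem PT_sum_smul_kronecker {dA dB n : ℕ} (p : Fin n → ℂ)
    (A : Fin n → Matrix (Fin dA) (Fin dA) ℂ) (B : Fin n → Matrix (Fin dB) (Fin dB) ℂ) :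
    PT (∑ i, p i • A i ⊗ₖ B i) = ∑ i, p i • A i ⊗ₖ (B i)ᵀ := by
  ext ⟨k, i⟩ ⟨l, j⟩
  simp [PT, Matrix.sum_apply, kroneckerMap_apply]

theorem SepState.posSemidef_PT {dA dB : ℕ} {ρ : Matrix (Fin dA × Fin dB) (Fin dA × Fin dB) ℂ}
    (h : SepState ρ) : (PT ρ).PosSemidef := by
  obtain ⟨n, p, A, B, hp, -, hA, hB, rfl⟩ := h
  rw [PT_sum_smul_kronecker]
  exact posSemidef_sum _ fun i _ =>
    ((hA i).1.kronecker (hB i).1.transpose).smul (Complex.zero_le_real.mpr (hp i))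

theorem SepState.of_blockDiagonal {dA dB : ℕ}
    {ρ : Matrix (Fin dA × Fin dB) (Fin dA × Fin dB) ℂ} (hρ : ρ.PosSemidef) (htr : ρ.trace = 1)
    (hblock : ∀ k l i j, k ≠ l → ρ (k, i) (l, j) = 0) : SepState ρ := by
  have : Nonempty (Fin dB) := by
    by_contra h
    rw [not_nonempty_iff] at h
    simp [trace] at htr
  set block := fun k : Fin dA => ρ.submatrix (k, ·) (k, ·)
  have hblock_psd : ∀ k, (block k).PosSemidef := fun k => hρ.submatrix _
  choose σ hσ hblock_eq using fun k => (hblock_psd k).exists_isDensityMatrix_smul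
  refine ⟨dA, fun k => (block k).trace.re, fun k => single k k 1, σ,
    fun k => (Complex.nonneg_iff.mp (hblock_psd k).trace_nonneg).1, ?_,
    fun k => isDensityMatrix_single k, hσ, ?_⟩
  · rw [← Complex.re_sum, ← trace_eq_sum_trace_submatrix, htr, Complex.one_re]
  · calc ρ = ∑ k, single k k 1 ⊗ₖ block k := eq_sum_single_kronecker_submatrix ρ hblock
      _ = _ := Finset.sum_congr rfl fun k _ => by rw [hblock_eq k, kronecker_smul]

theorem famState_apply_of_ne {dA dB : ℕ} {x : ℕ → ℕ → ℂ} (M N : ℕ → ℕ → ℕ → ℂ)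
    (hx : ∀ m n, m < dA → n < dA → m ≠ n → x m n = 0) {k l : Fin dA} (hkl : k ≠ l)
    (i j : Fin dB) : famState dA dB x M N (k, i) (l, j) = 0 := by
  simp [famState, hkl, hx k l k.2 l.2 (Fin.val_ne_of_ne hkl)]

theorem famState_diagonal_X_PPT_iff_sep_general (dA dB : ℕ)
    (x : ℕ → ℕ → ℂ) (M N : ℕ → ℕ → ℕ → ℂ)
    (hρ : (famState dA dB x M N).PosSemidef)
    (htr : (famState dA dB x M N).trace = 1)
    (hdiag : (PT (famState dA dB x M N)).PosSemidef →
      ∀ m n, m < dA → n < dA → m ≠ n → x m n = 0) :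
    ((PT (famState dA dB x M N)).PosSemidef → SepState (famState dA dB x M N)) ∧
    (SepState (famState dA dB x M N) ↔ (PT (famState dA dB x M N)).PosSemidef) := by
  have ppt_imp_sep (hppt : (PT (famState dA dB x M N)).PosSemidef) :
      SepState (famState dA dB x M N) :=
    .of_blockDiagonal hρ htr fun _ _ i j hkl => famState_apply_of_ne M N (hdiag hppt) hkl i j
  exact ⟨ppt_imp_sep, SepState.posSemidef_PT, ppt_imp_sep⟩

/-- for a density matrix of the family such that positivity of `ρ^Γ`
forces the `X` matrix to be diagonal, PPT implies separability; hence for such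
subfamilies PPT is necessary and sufficient for separability. -/
theorem famState_diagonal_X_PPT_iff_sep (dA dB : ℕ) (hd : dA ≤ dB)
    (x : ℕ → ℕ → ℂ) (M N : ℕ → ℕ → ℕ → ℂ)
    (hρ : (famState dA dB x M N).PosSemidef)
    (htr : (famState dA dB x M N).trace = 1)
    (hdiag : (PT (famState dA dB x M N)).PosSemidef →
      ∀ m n, m < dA → n < dA → m ≠ n → x m n = 0) :
    ((PT (famState dA dB x M N)).PosSemidef → SepState (famState dA dB x M N)) ∧
    (SepState (famState dA dB x M N) ↔ (PT (famState dA dB x M N)).PosSemidef) :=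
  famState_diagonal_X_PPT_iff_sep_general dA dB x M N hρ htr hdiag
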